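/- Let G be an amenable topological group whose left and right uniformities coincide (equivalently: for every neighbourhood U of the identity there is a neighbourhood V of the identity with gVg⁻¹ ⊆ U for all g ∈ G), and let H be a subgroup of G such that the quotient space G/H of left cosets, equipped with the quotient topology, is compact. Then H, with the subspace topology, is amenable. -/

import Mathlib

open scoped Topology

/-- A mean on the space of real-valued functions satisfying predicate `P`. -/
def IsMean {X : Type*} (P : (X → ℝ) → Prop) (μ : (X → ℝ) → ℝ) : Prop :=
  μ (fun _ => (1 : ℝ)) = 1 ∧
  (∀ f, P f → (∀ x, 0 ≤ f x) → 0 ≤ μ f) ∧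
  (∀ f g, P f → P g → μ (fun x => f x + g x) = μ f + μ g) ∧
  (∀ (c : ℝ) (f), P f → μ (fun x => c * f x) = c * μ f)

/-- `f : G → ℝ` is bounded and right uniformly continuous. -/
def IsRUCB (G : Type*) [Group G] [TopologicalSpace G] (f : G → ℝ) : Prop :=
  (∃ C, ∀ x, |f x| ≤ C) ∧
  ∀ ε : ℝ, 0 < ε → ∃ V ∈ 𝓝 (1 : G), ∀ v ∈ V, ∀ x, |f (v * x) - f x| < ε

/-- A topological group is amenable if there is a left-invariant mean on `RUCB(G)`. -/
def Amenable (G : Type*) [Group G] [TopologicalSpace G] : Prop :=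
  ∃ μ : (G → ℝ) → ℝ, IsMean (IsRUCB G) μ ∧
    ∀ (g : G) (f : G → ℝ), IsRUCB G f → μ (fun x => f (g * x)) = μ f

/-!
Fix a left-invariant mean `μ` on `RUCB(G)`. For a symmetric conjugation-invariant neighbourhood
`V` of `1`, the SIN property yields a bi-invariant pseudometric `D` on `G` whose small balls are
`V`-small, and compactness of `G ⧸ H` yields finitely many `u` such that the `D`-neighbourhoods
of the cosets `H u` cover `G`. A partition of unity `(w_u)` subordinate to this cover, invariant
under left multiplication by `H`, together with a choice of `a_u(x) ∈ H` with `x ∈ a_u(x) V u`,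
turns `f : H → ℝ` into `E f = ∑ w_u · f ∘ a_u` on `G`, which is `H`-equivariant up to the
oscillation of `f` on `V³`. Its McShane inf-convolution with respect to `D` is right uniformly
continuous and stays equally close to `E f`, so applying `μ` to it gives a left-invariant mean
on `RUCB(H)` up to errors controlled by that oscillation. For `f ∈ RUCB(H)` these errors vanish
as `V` shrinks, and a limit along an ultrafilter is a left-invariant mean on `RUCB(H)`.
-/

open Filter Set
open scoped Pointwise

section Pseudometric

variable {X : Type*}

structure IsPseudometric (D : X → X → ℝ) : Prop where
  dist_self : ∀ x, D x x = 0
  comm : ∀ x y, D x y = D y x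
  triangle : ∀ x y z, D x z ≤ D x y + D y z

theorem IsPseudometric.nonneg {D : X → X → ℝ} (hD : IsPseudometric D) (x y : X) :
    0 ≤ D x y := by
  have := hD.triangle x y x
  rw [hD.dist_self, hD.comm y x] at this
  linarith

structure IsBiInvPseudometric [Mul X] (D : X → X → ℝ) : Prop extends IsPseudometric D where
  mul_left : ∀ g x y, D (g * x) (g * y) = D x y
  mul_right : ∀ g x y, D (x * g) (y * g) = D x y

theorem IsBiInvPseudometric.mul_self_right [Monoid X] {D : X → X → ℝ}
    (hD : IsBiInvPseudometric D) (v x : X) : D (v * x) x = D v 1 := by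
  simpa using hD.mul_right x v 1

end Pseudometric

section BiInvDist

variable {M : Type*} [Group M] (d : M → M → ℝ)

/-- The least bi-invariant function above `min d 1`; truncating at `1` keeps it finite. -/
noncomputable def biInvDist (x y : M) : ℝ :=
  ⨆ p : M × M, min (d (p.1 * x * p.2) (p.1 * y * p.2)) 1

variable {d}

theorem bddAbove_range_min_one (x y : M) :
    BddAbove (range fun p : M × M => min (d (p.1 * x * p.2) (p.1 * y * p.2)) 1) :=
  ⟨1, by rintro _ ⟨p, rfl⟩; exact min_le_right _ _⟩

theorem min_one_le_biInvDist (a b x y : M) :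
    min (d (a * x * b) (a * y * b)) 1 ≤ biInvDist d x y :=
  le_ciSup (bddAbove_range_min_one x y) (a, b)

theorem biInvDist_le {x y : M} {c : ℝ} (h : ∀ a b, d (a * x * b) (a * y * b) ≤ c) :
    biInvDist d x y ≤ c :=
  ciSup_le fun p => (min_le_left _ _).trans (h p.1 p.2)

private theorem min_one_le_add {a b c : ℝ} (hb : 0 ≤ b) (hc : 0 ≤ c) (h : a ≤ b + c) :
    min a 1 ≤ min b 1 + min c 1 := by
  simp only [min_def]
  split_ifs <;> linarith

theorem isBiInvPseudometric_biInvDist (hd : IsPseudometric d) :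
    IsBiInvPseudometric (biInvDist d) where
  dist_self x := le_antisymm (biInvDist_le fun a b => (hd.dist_self _).le)
    (by simpa [hd.dist_self] using min_one_le_biInvDist (d := d) 1 1 x x)
  comm x y := by simp only [biInvDist, hd.comm (_ * x * _)]
  triangle x y z := ciSup_le fun p => (min_one_le_add (hd.nonneg _ _) (hd.nonneg _ _)
    (hd.triangle _ (p.1 * y * p.2) _)).trans
      (add_le_add (min_one_le_biInvDist _ _ _ _) (min_one_le_biInvDist _ _ _ _))
  mul_left g x y := by
    simpa only [biInvDist, mul_assoc, Equiv.prodCongr_apply, Prod.map_fst, Prod.map_snd,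
      Equiv.coe_mulRight, Equiv.coe_refl, id] using
      ((Equiv.mulRight g).prodCongr (Equiv.refl M)).iSup_comp
        (g := fun p : M × M => min (d (p.1 * x * p.2) (p.1 * y * p.2)) 1)
  mul_right g x y := by
    simpa only [biInvDist, mul_assoc, Equiv.prodCongr_apply, Prod.map_fst, Prod.map_snd,
      Equiv.coe_mulLeft, Equiv.coe_refl, id] using
      ((Equiv.refl M).prodCongr (Equiv.mulLeft g)).iSup_comp
        (g := fun p : M × M => min (d (p.1 * x * p.2) (p.1 * y * p.2)) 1)

end BiInvDist

section Chain

variable {G : Type*} [Group G] {W : ℕ → Set G}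

theorem exists_uniformSpace_hasBasis_of_chain (one_mem : ∀ n, (1 : G) ∈ W n)
    (inv_eq : ∀ n, (W n)⁻¹ = W n) (mul_subset : ∀ n, W (n + 1) * W (n + 1) ⊆ W n) :
    ∃ u : UniformSpace G,
      (@uniformity G u).HasBasis (fun _ => True) fun n => {p | p.1 * p.2⁻¹ ∈ W n} := by
  let R : ℕ → Set (G × G) := fun n => {p | p.1 * p.2⁻¹ ∈ W n}
  have hW : Antitone W := antitone_nat_of_succ_le fun n x hx => by
    simpa using mul_subset n (mul_mem_mul hx (one_mem (n + 1)))
  let B : FilterBasis (G × G) :=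
    { sets := range R
      nonempty := ⟨R 0, 0, rfl⟩
      inter_sets := by
        rintro _ _ ⟨m, rfl⟩ ⟨n, rfl⟩
        exact ⟨R (max m n), ⟨_, rfl⟩,
          fun p hp => ⟨hW (le_max_left m n) hp, hW (le_max_right m n) hp⟩⟩ }
  have refl : ∀ r ∈ B, ∀ x : G, (x, x) ∈ r := by
    rintro _ ⟨n, rfl⟩ x
    simpa [R] using one_mem n
  have symm : ∀ r ∈ B, ∃ t ∈ B, t ⊆ Prod.swap ⁻¹' r := by
    rintro _ ⟨n, rfl⟩
    refine ⟨R n, ⟨n, rfl⟩, fun p (hp : p.1 * p.2⁻¹ ∈ W n) => ?_⟩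
    rw [← inv_eq] at hp
    simpa [R] using hp
  have comp : ∀ r ∈ B, ∃ t ∈ B, SetRel.comp t t ⊆ r := by
    rintro _ ⟨n, rfl⟩
    refine ⟨R (n + 1), ⟨n + 1, rfl⟩, ?_⟩
    rintro ⟨x, y⟩ ⟨z, hxz, hzy⟩
    simpa [R] using mul_subset n (mul_mem_mul hxz hzy)
  refine ⟨.ofCore (.mkOfBasis B refl symm comp),
    ⟨fun S => B.hasBasis.mem_iff.trans ⟨?_, ?_⟩⟩⟩
  · rintro ⟨_, ⟨n, rfl⟩, hS⟩
    exact ⟨n, trivial, hS⟩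
  · rintro ⟨n, -, hS⟩
    exact ⟨R n, ⟨n, rfl⟩, hS⟩

theorem exists_isPseudometric_of_chain (one_mem : ∀ n, (1 : G) ∈ W n)
    (inv_eq : ∀ n, (W n)⁻¹ = W n) (mul_subset : ∀ n, W (n + 1) * W (n + 1) ⊆ W n) :
    ∃ d : G → G → ℝ, IsPseudometric d ∧
      (∀ ε > 0, ∃ n, ∀ x y, x * y⁻¹ ∈ W n → d x y < ε) ∧
      ∃ δ > 0, ∀ x y, d x y < δ → x * y⁻¹ ∈ W 0 := by
  obtain ⟨u, hR⟩ := exists_uniformSpace_hasBasis_of_chain one_mem inv_eq mul_subset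
  obtain ⟨I, hI⟩ := @UniformSpace.metrizable_uniformity G u hR.isCountablyGenerated
  refine ⟨@dist G I.toDist, ⟨@dist_self G I, @dist_comm G I, @dist_triangle G I⟩,
    fun ε hε => ?_, ?_⟩
  · have h := @Metric.dist_mem_uniformity G I ε hε
    rw [hI] at h
    obtain ⟨n, -, hn⟩ := hR.mem_iff.mp h
    exact ⟨n, fun x y hxy => hn (a := (x, y)) hxy⟩
  · have h := hR.mem_of_mem (i := 0) trivial
    rw [← hI] at h
    obtain ⟨δ, hδ, hR₀⟩ := (@Metric.mem_uniformity_dist G I _).mp h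
    exact ⟨δ, hδ, fun x y hxy => hR₀ (a := x) (b := y) hxy⟩

end Chain

def IsSIN (G : Type*) [Group G] [TopologicalSpace G] : Prop :=
  ∀ U ∈ 𝓝 (1 : G), ∃ V ∈ 𝓝 (1 : G), ∀ (g : G), ∀ v ∈ V, g * v * g⁻¹ ∈ U

section SIN

variable {G : Type*} [Group G] [TopologicalSpace G]

structure IsSymmConjNhd (V : Set G) : Prop where
  mem_nhds : V ∈ 𝓝 (1 : G)
  conj_mem : ∀ g, ∀ v ∈ V, g * v * g⁻¹ ∈ V
  inv_eq : V⁻¹ = V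

namespace IsSymmConjNhd

variable {V : Set G}

theorem one_mem (hV : IsSymmConjNhd V) : (1 : G) ∈ V := mem_of_mem_nhds hV.mem_nhds

theorem inv_mem (hV : IsSymmConjNhd V) {v : G} (hv : v ∈ V) : v⁻¹ ∈ V := by
  rw [← hV.inv_eq]
  exact inv_mem_inv.mpr hv

theorem conj_mem_mul_mul (hV : IsSymmConjNhd V) (g : G) {z : G} (hz : z ∈ V * V * V) :
    g * z * g⁻¹ ∈ V * V * V := by
  obtain ⟨_, ⟨a, ha, b, hb, rfl⟩, c, hc, rfl⟩ := hz
  refine ⟨_, mul_mem_mul (hV.conj_mem g a ha) (hV.conj_mem g b hb), _, hV.conj_mem g c hc, ?_⟩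
  group

end IsSymmConjNhd

theorem exists_isSymmConjNhd_subset (hSIN : IsSIN G) [IsTopologicalGroup G] {U : Set G}
    (hU : U ∈ 𝓝 (1 : G)) : ∃ V, IsSymmConjNhd V ∧ V ⊆ U := by
  let C : Set G := {x | ∀ g, g * x * g⁻¹ ∈ U}
  obtain ⟨V₀, hV₀, hV₀U⟩ := hSIN U hU
  have hC : C ∈ 𝓝 (1 : G) := mem_of_superset hV₀ fun v hv g => hV₀U g v hv
  have hCconj : ∀ g, ∀ x ∈ C, g * x * g⁻¹ ∈ C := fun g x hx g' => by
    simpa [mul_assoc] using hx (g' * g)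
  refine ⟨C ∩ C⁻¹, ⟨inter_mem hC (inv_mem_nhds_one G hC), ?_, ?_⟩,
    fun x hx => by simpa using hx.1 1⟩
  · rintro g v ⟨hv, hv'⟩
    refine ⟨hCconj g v hv, ?_⟩
    simpa [mul_assoc] using hCconj g v⁻¹ hv'
  · rw [inter_inv, inv_inv, inter_comm]

theorem exists_isSymmConjNhd_mul_subset (hSIN : IsSIN G) [IsTopologicalGroup G] {U : Set G}
    (hU : U ∈ 𝓝 (1 : G)) : ∃ V, IsSymmConjNhd V ∧ V * V ⊆ U := by
  obtain ⟨W, hW, hWU⟩ := exists_nhds_one_split hU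
  obtain ⟨V, hV, hVW⟩ := exists_isSymmConjNhd_subset hSIN hW
  exact ⟨V, hV, by rintro _ ⟨a, ha, b, hb, rfl⟩; exact hWU a (hVW ha) b (hVW hb)⟩

theorem exists_isSymmConjNhd_chain (hSIN : IsSIN G) [IsTopologicalGroup G] {U : Set G}
    (hU : U ∈ 𝓝 (1 : G)) : ∃ W : ℕ → Set G,
      (∀ n, IsSymmConjNhd (W n)) ∧ W 0 ⊆ U ∧ ∀ n, W (n + 1) * W (n + 1) ⊆ W n := by
  choose! next hnext using fun S (hS : S ∈ 𝓝 (1 : G)) =>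
    exists_isSymmConjNhd_mul_subset hSIN hS
  obtain ⟨V, hV, hVU⟩ := exists_isSymmConjNhd_subset hSIN hU
  have hW : ∀ n, IsSymmConjNhd (next^[n] V) := fun n => by
    induction n with
    | zero => exact hV
    | succ n ih => rw [Function.iterate_succ_apply']; exact (hnext _ ih.mem_nhds).1
  refine ⟨fun n => next^[n] V, hW, hVU, fun n => ?_⟩
  simpa only [Function.iterate_succ_apply'] using (hnext _ (hW n).mem_nhds).2

theorem exists_isBiInvPseudometric (hSIN : IsSIN G) [IsTopologicalGroup G] {U : Set G}
    (hU : U ∈ 𝓝 (1 : G)) :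
    ∃ D : G → G → ℝ, IsBiInvPseudometric D ∧ Tendsto (fun w => D w 1) (𝓝 1) (𝓝 0) ∧
      ∃ δ > 0, ∀ x y, D x y < δ → x * y⁻¹ ∈ U := by
  obtain ⟨W, hW, hWU, hWmul⟩ := exists_isSymmConjNhd_chain hSIN hU
  obtain ⟨d, hd, hd_small, δ, hδ, hd_sep⟩ := exists_isPseudometric_of_chain
    (fun n => (hW n).one_mem) (fun n => (hW n).inv_eq) hWmul
  have hD := isBiInvPseudometric_biInvDist hd
  refine ⟨biInvDist d, hD, tendsto_order.2 ⟨fun a ha => .of_forall fun w =>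
    ha.trans_le (hD.nonneg _ _), fun ε hε => ?_⟩, min δ 1, lt_min hδ one_pos,
    fun x y hxy => ?_⟩
  · obtain ⟨n, hn⟩ := hd_small (ε / 2) (half_pos hε)
    refine mem_of_superset (hW n).mem_nhds fun w hw => ?_
    refine (biInvDist_le fun a b => (hn _ _ ?_).le).trans_lt (half_lt_self hε)
    -- `(a * w * b) * (a * 1 * b)⁻¹ = a * w * a⁻¹`
    simpa [mul_assoc] using (hW n).conj_mem a w hw
  · have h := (min_one_le_biInvDist (d := d) 1 1 x y).trans_lt hxy
    have hd1 : d x y < 1 := by simpa using h.trans_le (min_le_right _ _)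
    simp only [one_mul, mul_one, min_eq_left hd1.le] at h
    exact hWU (hd_sep x y (h.trans_le (min_le_left _ _)))

end SIN

section Cover

variable {G : Type*} [Group G] [TopologicalSpace G] [IsTopologicalGroup G]

theorem exists_finset_eq_mul_mul (H : Subgroup G) [CompactSpace (G ⧸ H)] {W : Set G}
    (hW : W ∈ 𝓝 (1 : G)) :
    ∃ T : Finset G, ∀ x, ∃ u ∈ T, ∃ h ∈ H, ∃ w ∈ W, x = h * w * u := by
  let O := interior W
  let S : G → Set (G ⧸ H) := fun u => QuotientGroup.mk '' ((fun z => (u * z)⁻¹) ⁻¹' O)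
  have hS : ∀ u, IsOpen (S u) := fun u =>
    QuotientGroup.isOpenMap_coe _ (isOpen_interior.preimage (by fun_prop))
  have hcover : univ ⊆ ⋃ u, S u := by
    rintro q -
    obtain ⟨y, rfl⟩ := QuotientGroup.mk_surjective q
    exact mem_iUnion.mpr ⟨y⁻¹, y, by simpa [O] using mem_interior_iff_mem_nhds.mpr hW, rfl⟩
  obtain ⟨T, hT⟩ := isCompact_univ.elim_finite_subcover S hS hcover
  refine ⟨T, fun x => ?_⟩
  obtain ⟨u, hu, z, hz, hzx⟩ := by
    simpa only [mem_iUnion, exists_prop] using hT (mem_univ (QuotientGroup.mk x⁻¹ : G ⧸ H))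
  refine ⟨u, hu, x * z, ?_, (u * z)⁻¹, interior_subset hz, by group⟩
  simpa using H.inv_mem (QuotientGroup.eq.mp hzx)

end Cover

section InfConv

variable {X : Type*} {D : X → X → ℝ} {F : X → ℝ} {K B : ℝ}

noncomputable def infConv (D : X → X → ℝ) (F : X → ℝ) (K : ℝ) (x : X) : ℝ :=
  ⨅ y, F y + K * D y x

theorem neg_le_add_mul (hD : IsPseudometric D) (hK : 0 ≤ K) (hB : ∀ x, |F x| ≤ B) (x y : X) :
    -B ≤ F y + K * D y x := by
  nlinarith [neg_abs_le (F y), hB y, hD.nonneg y x]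

theorem bddBelow_range_add_mul (hD : IsPseudometric D) (hK : 0 ≤ K) (hB : ∀ x, |F x| ≤ B)
    (x : X) : BddBelow (range fun y => F y + K * D y x) :=
  ⟨-B, by rintro _ ⟨y, rfl⟩; exact neg_le_add_mul hD hK hB x y⟩

theorem infConv_le (hD : IsPseudometric D) (hK : 0 ≤ K) (hB : ∀ x, |F x| ≤ B) (x : X) :
    infConv D F K x ≤ F x :=
  (ciInf_le (bddBelow_range_add_mul hD hK hB x) x).trans_eq (by simp [hD.dist_self])

variable [Nonempty X]

theorem abs_infConv_le (hD : IsPseudometric D) (hK : 0 ≤ K) (hB : ∀ x, |F x| ≤ B) (x : X) :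
    |infConv D F K x| ≤ B :=
  abs_le.2 ⟨le_ciInf (neg_le_add_mul hD hK hB x),
    (infConv_le hD hK hB x).trans (le_of_abs_le (hB x))⟩

theorem infConv_le_add (hD : IsPseudometric D) (hK : 0 ≤ K) (hB : ∀ x, |F x| ≤ B) (x x' : X) :
    infConv D F K x ≤ infConv D F K x' + K * D x' x := by
  rw [← sub_le_iff_le_add]
  refine le_ciInf fun y => ?_
  have : infConv D F K x ≤ F y + K * D y x := ciInf_le (bddBelow_range_add_mul hD hK hB x) y
  linarith [mul_le_mul_of_nonneg_left (hD.triangle y x' x) hK]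

theorem abs_infConv_sub_le (hD : IsPseudometric D) (hK : 0 ≤ K) (hB : ∀ x, |F x| ≤ B)
    (x x' : X) : |infConv D F K x - infConv D F K x'| ≤ K * D x x' := by
  have h₁ := infConv_le_add hD hK hB x x'
  have h₂ := infConv_le_add hD hK hB x' x
  rw [hD.comm x' x] at h₁
  rw [abs_le]
  constructor <;> linarith

theorem sub_le_infConv (hK : 0 ≤ K) (hB : ∀ x, |F x| ≤ B) {r ω : ℝ} (hω : 0 ≤ ω)
    (hmod : ∀ x y, D y x < r → F x ≤ F y + K * D y x + ω) (hr : 2 * B ≤ K * r) (x : X) :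
    F x - ω ≤ infConv D F K x := by
  refine le_ciInf fun y => ?_
  rcases lt_or_ge (D y x) r with hyx | hyx
  · linarith [hmod x y hyx]
  · nlinarith [le_of_abs_le (hB x), neg_abs_le (F y), hB y]

theorem infConv_const (hD : IsPseudometric D) (hK : 0 ≤ K) (c : ℝ) (x : X) :
    infConv D (fun _ => c) K x = c :=
  le_antisymm (infConv_le hD hK (fun _ => le_rfl) x)
    (le_ciInf fun y => le_add_of_nonneg_right (mul_nonneg hK (hD.nonneg y x)))

end InfConv

theorem abs_div_sub_div_le {a b c d : ℝ} (hb : 1 / 2 ≤ b) (hd : 1 / 2 ≤ d) (hc₀ : 0 ≤ c)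
    (hc₁ : c ≤ 1) : |a / b - c / d| ≤ 2 * |a - c| + 4 * |b - d| := by
  have hb₀ : 0 < b := by linarith
  have hd₀ : 0 < d := by linarith
  have e : a / b - c / d = (a - c) / b + c * (d - b) / (b * d) := by field_simp; ring
  rw [e]
  refine (abs_add_le _ _).trans (add_le_add ?_ ?_)
  · rw [abs_div, abs_of_pos hb₀, div_le_iff₀ hb₀]
    nlinarith [abs_nonneg (a - c)]
  · rw [abs_div, abs_mul, abs_of_nonneg hc₀, abs_of_pos (mul_pos hb₀ hd₀), abs_sub_comm,
      div_le_iff₀ (mul_pos hb₀ hd₀)]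
    have : c ≤ 4 * (b * d) := by nlinarith
    nlinarith [mul_le_mul_of_nonneg_left this (abs_nonneg (b - d))]

noncomputable def supAbs {ι : Type*} (f : ι → ℝ) : ℝ := ⨆ i, |f i|

theorem supAbs_nonneg {ι : Type*} (f : ι → ℝ) : 0 ≤ supAbs f :=
  Real.iSup_nonneg fun _ => abs_nonneg _

theorem abs_le_supAbs {ι : Type*} {f : ι → ℝ} (hf : ∃ C, ∀ i, |f i| ≤ C) (i : ι) :
    |f i| ≤ supAbs f :=
  le_ciSup (hf.imp fun _ hC => by rintro _ ⟨j, rfl⟩; exact hC j) i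

section RUCB

variable {G : Type*} [Group G] [TopologicalSpace G]

theorem isRUCB_const (c : ℝ) : IsRUCB G fun _ => c :=
  ⟨⟨|c|, fun _ => le_rfl⟩,
    fun ε hε => ⟨univ, univ_mem, fun _ _ _ => by simpa using hε⟩⟩

theorem IsRUCB.add {f g : G → ℝ} (hf : IsRUCB G f) (hg : IsRUCB G g) :
    IsRUCB G fun x => f x + g x := by
  obtain ⟨⟨C, hC⟩, hf⟩ := hf
  obtain ⟨⟨C', hC'⟩, hg⟩ := hg
  refine ⟨⟨C + C', fun x => (abs_add_le _ _).trans (add_le_add (hC x) (hC' x))⟩,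
    fun ε hε => ?_⟩
  obtain ⟨U, hU, hfU⟩ := hf (ε / 2) (half_pos hε)
  obtain ⟨U', hU', hgU'⟩ := hg (ε / 2) (half_pos hε)
  refine ⟨U ∩ U', inter_mem hU hU', fun v hv x => ?_⟩
  calc |f (v * x) + g (v * x) - (f x + g x)|
      ≤ |f (v * x) - f x| + |g (v * x) - g x| := by
        rw [add_sub_add_comm]; exact abs_add_le _ _
    _ < ε / 2 + ε / 2 := add_lt_add (hfU v hv.1 x) (hgU' v hv.2 x)
    _ = ε := add_halves ε

theorem IsRUCB.const_mul {f : G → ℝ} (hf : IsRUCB G f) (c : ℝ) :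
    IsRUCB G fun x => c * f x := by
  obtain ⟨⟨C, hC⟩, hf⟩ := hf
  refine ⟨⟨|c| * C, fun x => by rw [abs_mul]; gcongr; exact hC x⟩, fun ε hε => ?_⟩
  obtain ⟨U, hU, hfU⟩ := hf (ε / (|c| + 1)) (by positivity)
  refine ⟨U, hU, fun v hv x => ?_⟩
  calc |c * f (v * x) - c * f x| = |c| * |f (v * x) - f x| := by rw [← mul_sub, abs_mul]
    _ ≤ |c| * (ε / (|c| + 1)) := by gcongr; exact (hfU v hv x).le
    _ < ε := by
      rw [mul_div_assoc', div_lt_iff₀ (by positivity)]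
      nlinarith [abs_nonneg c]

theorem IsRUCB.sub {f g : G → ℝ} (hf : IsRUCB G f) (hg : IsRUCB G g) :
    IsRUCB G fun x => f x - g x := by
  simpa [sub_eq_add_neg] using hf.add (hg.const_mul (-1))

theorem IsBiInvPseudometric.isRUCB {D : G → G → ℝ} (hD : IsBiInvPseudometric D)
    (hD₁ : Tendsto (fun w => D w 1) (𝓝 1) (𝓝 0)) {F : G → ℝ} {K B : ℝ}
    (hB : ∀ x, |F x| ≤ B) (hF : ∀ x y, |F x - F y| ≤ K * D x y) : IsRUCB G F := by
  refine ⟨⟨B, hB⟩, fun ε hε => ⟨_,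
    (hD₁.const_mul K).eventually (gt_mem_nhds (by simpa using hε)),
    fun v hv x => (hF _ _).trans_lt ?_⟩⟩
  rwa [hD.mul_self_right]

end RUCB

namespace IsMean

variable {G : Type*} [Group G] [TopologicalSpace G] {μ : (G → ℝ) → ℝ}

theorem map_const (hμ : IsMean (IsRUCB G) μ) (c : ℝ) : μ (fun _ => c) = c := by
  simpa [hμ.1] using hμ.2.2.2 c _ (isRUCB_const 1)

theorem map_sub (hμ : IsMean (IsRUCB G) μ) {f g : G → ℝ} (hf : IsRUCB G f)
    (hg : IsRUCB G g) : μ (fun x => f x - g x) = μ f - μ g := by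
  have := hμ.2.2.1 _ _ (hf.sub hg) hg
  simp only [sub_add_cancel] at this
  exact eq_sub_of_add_eq this.symm

theorem const_le (hμ : IsMean (IsRUCB G) μ) {f : G → ℝ} (hf : IsRUCB G f) {c : ℝ}
    (h : ∀ x, c ≤ f x) : c ≤ μ f := by
  have := hμ.2.1 _ (hf.sub (isRUCB_const c)) fun x => sub_nonneg.2 (h x)
  rwa [hμ.map_sub hf (isRUCB_const c), hμ.map_const, sub_nonneg] at this

theorem abs_sub_le (hμ : IsMean (IsRUCB G) μ) {f g : G → ℝ} (hf : IsRUCB G f)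
    (hg : IsRUCB G g) {c : ℝ} (h : ∀ x, |f x - g x| ≤ c) : |μ f - μ g| ≤ c := by
  rw [← hμ.map_sub hf hg, abs_le]
  constructor
  · exact hμ.const_le (hf.sub hg) fun x => (abs_le.1 (h x)).1
  · have := hμ.const_le (hg.sub hf) (c := -c) fun x => by linarith [(abs_le.1 (h x)).2]
    rw [hμ.map_sub hg hf] at this
    linarith [hμ.map_sub hf hg]

end IsMean

section Oscillation

variable {G : Type*} [Group G] {H : Subgroup G}

def OscLE (f : H → ℝ) (S : Set G) (ε : ℝ) : Prop :=
  ∀ a b : H, (a : G) * (b : G)⁻¹ ∈ S → |f a - f b| ≤ ε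

namespace OscLE

variable {f g : H → ℝ} {S : Set G} {ε ε' : ℝ}

theorem mono {S' : Set G} (hf : OscLE f S ε) (hS : S' ⊆ S) : OscLE f S' ε :=
  fun a b hab => hf a b (hS hab)

theorem add (hf : OscLE f S ε) (hg : OscLE g S ε') :
    OscLE (fun h => f h + g h) S (ε + ε') := fun a b hab => by
  rw [add_sub_add_comm]
  exact (abs_add_le _ _).trans (add_le_add (hf a b hab) (hg a b hab))

theorem const_mul (hf : OscLE f S ε) (c : ℝ) : OscLE (fun h => c * f h) S (|c| * ε) :=
  fun a b hab => by rw [← mul_sub, abs_mul]; gcongr; exact hf a b hab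

theorem comp_mul_left (hf : OscLE f S ε) (hS : ∀ g : G, ∀ z ∈ S, g * z * g⁻¹ ∈ S)
    (c : H) :
    OscLE (fun h => f (c * h)) S ε := fun a b hab => hf _ _ (by simpa [mul_assoc] using hS c _ hab)

end OscLE

theorem IsRUCB.exists_oscLE [TopologicalSpace G] {f : H → ℝ} (hf : IsRUCB H f) {ε : ℝ}
    (hε : 0 < ε) : ∃ U ∈ 𝓝 (1 : G), OscLE f U ε := by
  obtain ⟨U, hU, hfU⟩ := hf.2 ε hε
  obtain ⟨U', hU', hU'U⟩ := (mem_nhds_induced _ _ _).1 hU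
  refine ⟨U', hU', fun a b hab => ?_⟩
  simpa using (hfU (a * b⁻¹) (hU'U (by simpa using hab)) b).le

end Oscillation

section Transfer

variable {G : Type*} [Group G]

open Classical in
/-- A point `a ∈ H` with `x ∈ a V u`, when there is one. -/
noncomputable def tubeCoord (H : Subgroup G) (V : Set G) (u x : G) : H :=
  if h : ∃ a : H, (a : G)⁻¹ * x * u⁻¹ ∈ V then h.choose else 1

theorem tubeCoord_spec {H : Subgroup G} {V : Set G} {u x : G}
    (h : ∃ a : H, (a : G)⁻¹ * x * u⁻¹ ∈ V) :
    ((tubeCoord H V u x : H) : G)⁻¹ * x * u⁻¹ ∈ V := by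
  rw [tubeCoord, dif_pos h]
  exact h.choose_spec

variable [TopologicalSpace G]

theorem IsSymmConjNhd.mul_inv_mem_mul_mul {V : Set G} (hV : IsSymmConjNhd V) {a b u x y : G}
    (ha : a⁻¹ * x * u⁻¹ ∈ V) (hb : b⁻¹ * y * u⁻¹ ∈ V) (hxy : y * x⁻¹ ∈ V) :
    b * a⁻¹ ∈ V * V * V :=
  ⟨_, mul_mem_mul hxy (hV.conj_mem a _ ha), _, hV.conj_mem a _ (hV.inv_mem hb), by group⟩

/-- The data at scale `V` for transferring functions from `H` to `G`. -/
structure Scale (H : Subgroup G) (V : Set G) where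
  isSymmConjNhd : IsSymmConjNhd V
  D : G → G → ℝ
  biInv : IsBiInvPseudometric D
  tendsto : Tendsto (fun w => D w 1) (𝓝 1) (𝓝 0)
  δ : ℝ
  δ_pos : 0 < δ
  mul_inv_mem : ∀ x y, D x y < δ → x * y⁻¹ ∈ V
  T : Finset G
  cover : ∀ x, ∃ u ∈ T, ∃ h ∈ H, D x (h * u) ≤ δ / 8

theorem Scale.nonempty [IsTopologicalGroup G] (hSIN : IsSIN G) (H : Subgroup G)
    [CompactSpace (G ⧸ H)] {V : Set G} (hV : IsSymmConjNhd V) : Nonempty (Scale H V) := by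
  obtain ⟨D, hD, hD1, δ, hδ, hsep⟩ := exists_isBiInvPseudometric hSIN hV.mem_nhds
  obtain ⟨T, hT⟩ :=
    exists_finset_eq_mul_mul H ((tendsto_order.1 hD1).2 (δ / 8) (by positivity))
  refine ⟨⟨hV, D, hD, hD1, δ, hδ, hsep, T, fun x => ?_⟩⟩
  obtain ⟨u, hu, h, hh, w, hw, rfl⟩ := hT x
  refine ⟨u, hu, h, hh, ?_⟩
  rw [mul_assoc, hD.mul_left, hD.mul_self_right]
  exact le_of_lt hw

namespace Scale

variable {H : Subgroup G} {V : Set G} (s : Scale H V)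

noncomputable def tubeDist (u x : G) : ℝ := ⨅ a : H, s.D x (a * u)

theorem bddBelow_range_dist (u x : G) : BddBelow (range fun a : H => s.D x (a * u)) :=
  ⟨0, by rintro _ ⟨a, rfl⟩; exact s.biInv.nonneg _ _⟩

theorem tubeDist_nonneg (u x : G) : 0 ≤ s.tubeDist u x :=
  le_ciInf fun _ => s.biInv.nonneg _ _

theorem tubeDist_le (u x : G) (a : H) : s.tubeDist u x ≤ s.D x (a * u) :=
  ciInf_le (s.bddBelow_range_dist u x) a

theorem tubeDist_le_add (u x y : G) : s.tubeDist u x ≤ s.D x y + s.tubeDist u y := by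
  rw [← sub_le_iff_le_add']
  exact le_ciInf fun a => by linarith [s.tubeDist_le u x a, s.biInv.triangle x y (a * u)]

theorem abs_tubeDist_sub_le (u x y : G) : |s.tubeDist u x - s.tubeDist u y| ≤ s.D x y := by
  have := s.tubeDist_le_add u y x
  rw [s.biInv.comm] at this
  exact abs_sub_le_iff.2 ⟨by linarith [s.tubeDist_le_add u x y], by linarith⟩

theorem tubeDist_mul_left (c : H) (u x : G) : s.tubeDist u (c * x) = s.tubeDist u x := by
  rw [tubeDist, ← (Equiv.mulLeft c).iInf_comp]
  simp [mul_assoc, s.biInv.mul_left, tubeDist]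

theorem exists_mem_of_tubeDist_lt {u x : G} (h : s.tubeDist u x < s.δ) :
    ∃ a : H, (a : G)⁻¹ * x * u⁻¹ ∈ V := by
  obtain ⟨a, ha⟩ := exists_lt_of_ciInf_lt h
  refine ⟨a, ?_⟩
  simpa [mul_assoc] using s.isSymmConjNhd.conj_mem (a : G)⁻¹ _ (s.mul_inv_mem _ _ ha)

noncomputable def bump (u x : G) : ℝ := max (1 - 4 / s.δ * s.tubeDist u x) 0

theorem bump_nonneg (u x : G) : 0 ≤ s.bump u x := le_max_right _ _

theorem bump_le_one (u x : G) : s.bump u x ≤ 1 :=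
  max_le (by have := s.δ_pos; have := s.tubeDist_nonneg u x; nlinarith [div_pos four_pos s.δ_pos])
    zero_le_one

theorem abs_bump_sub_le (u x y : G) : |s.bump u x - s.bump u y| ≤ 4 / s.δ * s.D x y := by
  refine (abs_max_sub_max_le_abs _ _ _).trans ?_
  rw [sub_sub_sub_cancel_left, ← mul_sub, abs_mul, abs_of_pos (div_pos four_pos s.δ_pos),
    abs_sub_comm]
  exact mul_le_mul_of_nonneg_left (s.abs_tubeDist_sub_le u x y) (div_pos four_pos s.δ_pos).le

theorem bump_mul_left (c : H) (u x : G) : s.bump u (c * x) = s.bump u x := by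
  rw [bump, bump, tubeDist_mul_left]

theorem half_le_bump {u x : G} (h : s.tubeDist u x ≤ s.δ / 8) : 1 / 2 ≤ s.bump u x := by
  have : 4 / s.δ * (s.δ / 8) = 1 / 2 := by field_simp [s.δ_pos.ne']; norm_num
  refine le_max_of_le_left ?_
  linarith [mul_le_mul_of_nonneg_left h (div_pos four_pos s.δ_pos).le]

theorem tubeDist_lt_of_bump_ne_zero {u x : G} (h : s.bump u x ≠ 0) :
    s.tubeDist u x < s.δ / 4 := by
  by_contra! hx
  refine h (max_eq_right ?_)
  have : 4 / s.δ * (s.δ / 4) = 1 := by field_simp [s.δ_pos.ne']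
  nlinarith [mul_le_mul_of_nonneg_left hx (div_pos four_pos s.δ_pos).le]

noncomputable def bumpSum (x : G) : ℝ := ∑ u ∈ s.T, s.bump u x

theorem half_le_bumpSum (x : G) : 1 / 2 ≤ s.bumpSum x := by
  obtain ⟨u, hu, h, hh, hx⟩ := s.cover x
  exact (s.half_le_bump ((s.tubeDist_le u x ⟨h, hh⟩).trans hx)).trans
    (Finset.single_le_sum (fun v _ => s.bump_nonneg v x) hu)

theorem bumpSum_pos (x : G) : 0 < s.bumpSum x := by linarith [s.half_le_bumpSum x]

theorem abs_bumpSum_sub_le (x y : G) :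
    |s.bumpSum x - s.bumpSum y| ≤ s.T.card * (4 / s.δ * s.D x y) := by
  rw [bumpSum, bumpSum, ← Finset.sum_sub_distrib]
  refine (Finset.abs_sum_le_sum_abs _ _).trans ?_
  simpa using Finset.sum_le_card_nsmul _ _ _ fun u _ => s.abs_bump_sub_le u x y

theorem bumpSum_mul_left (c : H) (x : G) : s.bumpSum (c * x) = s.bumpSum x := by
  simp only [bumpSum, bump_mul_left]

noncomputable def weight (u x : G) : ℝ := s.bump u x / s.bumpSum x

theorem weight_nonneg (u x : G) : 0 ≤ s.weight u x :=
  div_nonneg (s.bump_nonneg u x) (s.bumpSum_pos x).le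

theorem sum_weight (x : G) : ∑ u ∈ s.T, s.weight u x = 1 := by
  simp only [weight]
  rw [← Finset.sum_div, ← bumpSum, div_self (s.bumpSum_pos x).ne']

theorem weight_mul_left (c : H) (u x : G) : s.weight u (c * x) = s.weight u x := by
  rw [weight, weight, bump_mul_left, bumpSum_mul_left]

theorem tubeDist_lt_of_weight_ne_zero {u x : G} (h : s.weight u x ≠ 0) :
    s.tubeDist u x < s.δ / 4 :=
  s.tubeDist_lt_of_bump_ne_zero (div_ne_zero_iff.1 h).1

noncomputable def weightLip : ℝ := 4 / s.δ * (2 + 4 * s.T.card)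

theorem weightLip_nonneg : 0 ≤ s.weightLip := by
  have := s.δ_pos
  unfold weightLip
  positivity

theorem abs_weight_sub_le (u x y : G) :
    |s.weight u x - s.weight u y| ≤ s.weightLip * s.D x y := by
  refine (abs_div_sub_div_le (s.half_le_bumpSum x) (s.half_le_bumpSum y) (s.bump_nonneg u y)
    (s.bump_le_one u y)).trans ?_
  have h₁ := s.abs_bump_sub_le u x y
  have h₂ := s.abs_bumpSum_sub_le x y
  rw [weightLip]
  nlinarith

noncomputable def extend (f : H → ℝ) (x : G) : ℝ :=
  ∑ u ∈ s.T, s.weight u x * f (tubeCoord H V u x)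

theorem abs_sum_weight_mul_sub_le {a b : G → ℝ} {ε : ℝ} (x : G)
    (h : ∀ u ∈ s.T, s.weight u x ≠ 0 → |a u - b u| ≤ ε) :
    |∑ u ∈ s.T, s.weight u x * a u - ∑ u ∈ s.T, s.weight u x * b u| ≤ ε := by
  rw [← Finset.sum_sub_distrib]
  calc |∑ u ∈ s.T, (s.weight u x * a u - s.weight u x * b u)|
      ≤ ∑ u ∈ s.T, s.weight u x * ε := by
        refine (Finset.abs_sum_le_sum_abs _ _).trans (Finset.sum_le_sum fun u hu => ?_)
        rw [← mul_sub, abs_mul, abs_of_nonneg (s.weight_nonneg u x)]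
        by_cases hw : s.weight u x = 0
        · simp [hw]
        · exact mul_le_mul_of_nonneg_left (h u hu hw) (s.weight_nonneg u x)
    _ = ε := by rw [← Finset.sum_mul, s.sum_weight, one_mul]

theorem abs_extend_le {f : H → ℝ} {C : ℝ} (hC : ∀ h, |f h| ≤ C) (x : G) :
    |s.extend f x| ≤ C := by
  simpa [extend] using s.abs_sum_weight_mul_sub_le (b := 0) x fun u _ _ => by simpa using hC _

theorem extend_add (f g : H → ℝ) (x : G) :
    s.extend (fun h => f h + g h) x = s.extend f x + s.extend g x := by
  simp only [extend, mul_add, Finset.sum_add_distrib]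

theorem extend_const_mul (c : ℝ) (f : H → ℝ) (x : G) :
    s.extend (fun h => c * f h) x = c * s.extend f x := by
  simp only [extend, Finset.mul_sum, mul_left_comm]

theorem extend_const (c : ℝ) (x : G) : s.extend (fun _ => c) x = c := by
  rw [extend, ← Finset.sum_mul, s.sum_weight, one_mul]

theorem extend_nonneg {f : H → ℝ} (hf : ∀ h, 0 ≤ f h) (x : G) : 0 ≤ s.extend f x :=
  Finset.sum_nonneg fun u _ => mul_nonneg (s.weight_nonneg u x) (hf _)

theorem abs_extend_sub_le {f : H → ℝ} {C ε : ℝ} (hC : ∀ h, |f h| ≤ C)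
    (hf : OscLE f (V * V * V) ε) {x y : G} (hxy : s.D y x < s.δ / 4) :
    |s.extend f y - s.extend f x| ≤ s.T.card * s.weightLip * C * s.D y x + ε := by
  have hcoord : ∀ u ∈ s.T, s.weight u x ≠ 0 →
      |f (tubeCoord H V u y) - f (tubeCoord H V u x)| ≤ ε := fun u _ hw => by
    have hx := s.tubeDist_lt_of_weight_ne_zero hw
    have hy := s.tubeDist_le_add u y x
    refine hf _ _ (s.isSymmConjNhd.mul_inv_mem_mul_mul (tubeCoord_spec ?_) (tubeCoord_spec ?_)
      (s.mul_inv_mem y x (by linarith [s.δ_pos])))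
    · exact s.exists_mem_of_tubeDist_lt (by linarith [s.δ_pos])
    · exact s.exists_mem_of_tubeDist_lt (by linarith [s.δ_pos])
  have hweight : |∑ u ∈ s.T, (s.weight u y - s.weight u x) * f (tubeCoord H V u y)| ≤
      s.T.card * s.weightLip * C * s.D y x := by
    refine (Finset.abs_sum_le_sum_abs _ _).trans ?_
    have := Finset.sum_le_card_nsmul s.T
      (fun u => |(s.weight u y - s.weight u x) * f (tubeCoord H V u y)|)
      (s.weightLip * s.D y x * C) fun u _ => (abs_mul _ _).trans_le
      (mul_le_mul (s.abs_weight_sub_le u y x) (hC _) (abs_nonneg _)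
        (mul_nonneg s.weightLip_nonneg (s.biInv.nonneg y x)))
    simpa [mul_comm, mul_left_comm, mul_assoc] using this
  have := s.abs_sum_weight_mul_sub_le x hcoord
  calc |s.extend f y - s.extend f x|
      = |∑ u ∈ s.T, (s.weight u y - s.weight u x) * f (tubeCoord H V u y) +
          (∑ u ∈ s.T, s.weight u x * f (tubeCoord H V u y) -
            ∑ u ∈ s.T, s.weight u x * f (tubeCoord H V u x))| := by
        simp only [extend, sub_mul, Finset.sum_sub_distrib]; ring_nf
    _ ≤ _ := (abs_add_le _ _).trans (add_le_add hweight this)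

theorem abs_extend_comp_mul_left_sub_le {f : H → ℝ} {ε : ℝ} (hf : OscLE f (V * V * V) ε)
    (c : H) (x : G) : |s.extend (fun h => f (c * h)) x - s.extend f (c * x)| ≤ ε := by
  simp only [extend, weight_mul_left]
  refine s.abs_sum_weight_mul_sub_le x fun u _ hw => ?_
  have hx := s.tubeDist_lt_of_weight_ne_zero hw
  have hcx : ∃ a : H, (a : G)⁻¹ * (c * x) * u⁻¹ ∈ V :=
    s.exists_mem_of_tubeDist_lt (by rw [tubeDist_mul_left]; linarith [s.δ_pos])
  -- `c * tubeCoord u x` and `tubeCoord u (c * x)` are both coordinates of `c * x` at `u`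
  rw [abs_sub_comm]
  refine hf _ _ (s.isSymmConjNhd.mul_inv_mem_mul_mul (x := c * x) ?_ (tubeCoord_spec hcx)
    (by simpa using s.isSymmConjNhd.one_mem))
  simpa [mul_assoc] using tubeCoord_spec (s.exists_mem_of_tubeDist_lt (u := u) (x := x)
    (by linarith [s.δ_pos]))

/-- The slope of the cone smoothing `s.extend f`: it dominates the Lipschitz constant of
`s.extend f` at scale `δ / 4`, and over a distance `δ / 4` it climbs `2 * supAbs f`. -/
noncomputable def coneSlope (f : H → ℝ) : ℝ := (s.T.card * s.weightLip + 8 / s.δ) * supAbs f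

theorem coneSlope_nonneg (f : H → ℝ) : 0 ≤ s.coneSlope f := by
  have := s.δ_pos
  have := s.weightLip_nonneg
  have := supAbs_nonneg f
  unfold coneSlope
  positivity

theorem lip_le_coneSlope (f : H → ℝ) : s.T.card * s.weightLip * supAbs f ≤ s.coneSlope f := by
  have : 0 ≤ 8 / s.δ * supAbs f := mul_nonneg (div_pos (by norm_num) s.δ_pos).le (supAbs_nonneg f)
  rw [coneSlope]
  linarith

theorem two_mul_supAbs_le_coneSlope_mul (f : H → ℝ) :
    2 * supAbs f ≤ s.coneSlope f * (s.δ / 4) := by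
  have h₂ : 8 / s.δ * supAbs f * (s.δ / 4) = 2 * supAbs f := by
    field_simp [s.δ_pos.ne']; ring
  have := s.δ_pos
  have := s.weightLip_nonneg
  have := supAbs_nonneg f
  have : 0 ≤ s.T.card * s.weightLip * supAbs f * (s.δ / 4) := by positivity
  rw [coneSlope, add_mul, add_mul, h₂]
  linarith

noncomputable def smoothExtend (f : H → ℝ) : G → ℝ :=
  infConv s.D (s.extend f) (s.coneSlope f)

variable {f g : H → ℝ} {ε : ℝ}

theorem abs_smoothExtend_le (hf : ∃ C, ∀ h, |f h| ≤ C) (x : G) :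
    |s.smoothExtend f x| ≤ supAbs f :=
  abs_infConv_le s.biInv.toIsPseudometric (s.coneSlope_nonneg f)
    (s.abs_extend_le (abs_le_supAbs hf)) x

theorem abs_smoothExtend_sub_extend_le (hf : ∃ C, ∀ h, |f h| ≤ C) (hε : 0 ≤ ε)
    (hosc : OscLE f (V * V * V) ε) (x : G) : |s.smoothExtend f x - s.extend f x| ≤ ε := by
  have hB := s.abs_extend_le (abs_le_supAbs hf)
  have hD := s.biInv.toIsPseudometric
  have hK := s.coneSlope_nonneg f
  have hmod : ∀ x y, s.D y x < s.δ / 4 →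
      s.extend f x ≤ s.extend f y + s.coneSlope f * s.D y x + ε := fun x y hyx => by
    have := le_of_abs_le ((abs_sub_comm _ _).trans_le
      (s.abs_extend_sub_le (abs_le_supAbs hf) hosc hyx))
    nlinarith [mul_le_mul_of_nonneg_right (s.lip_le_coneSlope f) (hD.nonneg y x)]
  have hle : s.smoothExtend f x ≤ s.extend f x := infConv_le hD hK hB x
  have hge : s.extend f x - ε ≤ s.smoothExtend f x :=
    sub_le_infConv hK hB hε hmod (s.two_mul_supAbs_le_coneSlope_mul f) x
  exact abs_sub_le_iff.2 ⟨by linarith, by linarith⟩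

theorem isRUCB_smoothExtend_comp_mul_left (hf : ∃ C, ∀ h, |f h| ≤ C) (c : G) :
    IsRUCB G fun x => s.smoothExtend f (c * x) :=
  s.biInv.isRUCB s.tendsto (fun x => s.abs_smoothExtend_le hf (c * x)) fun x y => by
    simpa only [smoothExtend, s.biInv.mul_left] using abs_infConv_sub_le s.biInv.toIsPseudometric
      (s.coneSlope_nonneg f) (s.abs_extend_le (abs_le_supAbs hf)) (c * x) (c * y)

theorem isRUCB_smoothExtend (hf : ∃ C, ∀ h, |f h| ≤ C) : IsRUCB G (s.smoothExtend f) := by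
  simpa using s.isRUCB_smoothExtend_comp_mul_left hf 1

theorem smoothExtend_const (c : ℝ) : s.smoothExtend (fun _ => c) = fun _ => c := by
  funext x
  simp only [smoothExtend]
  rw [show s.extend (fun _ => c) = fun _ => c from funext (s.extend_const c)]
  exact infConv_const s.biInv.toIsPseudometric (s.coneSlope_nonneg _) c x

noncomputable def approxMean (μ : (G → ℝ) → ℝ) (f : H → ℝ) : ℝ :=
  μ (s.smoothExtend f)

variable {μ : (G → ℝ) → ℝ}

theorem approxMean_const (hμ : IsMean (IsRUCB G) μ) : s.approxMean μ (fun _ => 1) = 1 := by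
  rw [approxMean, smoothExtend_const, hμ.1]

theorem abs_approxMean_le (hμ : IsMean (IsRUCB G) μ) (hf : ∃ C, ∀ h, |f h| ≤ C) :
    |s.approxMean μ f| ≤ supAbs f := by
  simpa [approxMean, hμ.map_const] using hμ.abs_sub_le (s.isRUCB_smoothExtend hf) (isRUCB_const 0)
    fun x => by simpa using s.abs_smoothExtend_le hf x

theorem neg_le_approxMean (hμ : IsMean (IsRUCB G) μ) (hf : ∃ C, ∀ h, |f h| ≤ C)
    (hε : 0 ≤ ε) (hosc : OscLE f (V * V * V) ε) (hpos : ∀ h, 0 ≤ f h) :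
    -ε ≤ s.approxMean μ f :=
  hμ.const_le (s.isRUCB_smoothExtend hf) fun x => by
    linarith [abs_le.1 (s.abs_smoothExtend_sub_extend_le hf hε hosc x), s.extend_nonneg hpos x]

theorem abs_approxMean_add_sub_le (hμ : IsMean (IsRUCB G) μ) (hf : ∃ C, ∀ h, |f h| ≤ C)
    (hg : ∃ C, ∀ h, |g h| ≤ C) (hε : 0 ≤ ε) (hfε : OscLE f (V * V * V) ε)
    (hgε : OscLE g (V * V * V) ε) :
    |s.approxMean μ (fun h => f h + g h) - (s.approxMean μ f + s.approxMean μ g)| ≤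
      4 * ε := by
  have hfg : ∃ C, ∀ h, |f h + g h| ≤ C := by
    obtain ⟨C, hC⟩ := hf
    obtain ⟨C', hC'⟩ := hg
    exact ⟨C + C', fun h => (abs_add_le _ _).trans (add_le_add (hC h) (hC' h))⟩
  rw [approxMean, approxMean, approxMean,
    ← hμ.2.2.1 _ _ (s.isRUCB_smoothExtend hf) (s.isRUCB_smoothExtend hg)]
  refine hμ.abs_sub_le (s.isRUCB_smoothExtend hfg)
    ((s.isRUCB_smoothExtend hf).add (s.isRUCB_smoothExtend hg)) fun x => ?_
  have h₁ := s.abs_smoothExtend_sub_extend_le hfg (by linarith) (hfε.add hgε) x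
  have h₂ := s.abs_smoothExtend_sub_extend_le hf hε hfε x
  have h₃ := s.abs_smoothExtend_sub_extend_le hg hε hgε x
  rw [s.extend_add] at h₁
  rw [abs_le] at *
  constructor <;> linarith

theorem abs_approxMean_const_mul_sub_le (hμ : IsMean (IsRUCB G) μ)
    (hf : ∃ C, ∀ h, |f h| ≤ C) (hε : 0 ≤ ε) (hfε : OscLE f (V * V * V) ε) (c : ℝ) :
    |s.approxMean μ (fun h => c * f h) - c * s.approxMean μ f| ≤ 2 * (|c| * ε) := by
  have hcf : ∃ C, ∀ h, |c * f h| ≤ C := by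
    obtain ⟨C, hC⟩ := hf
    exact ⟨|c| * C, fun h => by
      rw [abs_mul]; exact mul_le_mul_of_nonneg_left (hC h) (abs_nonneg c)⟩
  rw [approxMean, approxMean, ← hμ.2.2.2 c _ (s.isRUCB_smoothExtend hf)]
  refine hμ.abs_sub_le (s.isRUCB_smoothExtend hcf) ((s.isRUCB_smoothExtend hf).const_mul c)
    fun x => ?_
  have h₁ := s.abs_smoothExtend_sub_extend_le hcf (by positivity) (hfε.const_mul c) x
  have h₂ : |c * s.smoothExtend f x - c * s.extend f x| ≤ |c| * ε := by
    rw [← mul_sub, abs_mul]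
    exact mul_le_mul_of_nonneg_left (s.abs_smoothExtend_sub_extend_le hf hε hfε x) (abs_nonneg c)
  rw [s.extend_const_mul] at h₁
  rw [abs_le] at *
  constructor <;> linarith

theorem abs_approxMean_comp_mul_left_sub_le (hμ : IsMean (IsRUCB G) μ)
    (hinv : ∀ (g : G) (F : G → ℝ), IsRUCB G F → μ (fun x => F (g * x)) = μ F)
    (hf : ∃ C, ∀ h, |f h| ≤ C) (hε : 0 ≤ ε) (hfε : OscLE f (V * V * V) ε) (c : H) :
    |s.approxMean μ (fun h => f (c * h)) - s.approxMean μ f| ≤ 3 * ε := by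
  have hcf : ∃ C, ∀ h, |f (c * h)| ≤ C := hf.imp fun _ hC _ => hC _
  rw [approxMean, approxMean, ← hinv c _ (s.isRUCB_smoothExtend hf)]
  refine hμ.abs_sub_le (s.isRUCB_smoothExtend hcf) (s.isRUCB_smoothExtend_comp_mul_left hf c)
    fun x => ?_
  have h₁ := s.abs_smoothExtend_sub_extend_le hcf hε
    (hfε.comp_mul_left (fun g _ hz => s.isSymmConjNhd.conj_mem_mul_mul g hz) c) x
  have h₂ := s.abs_extend_comp_mul_left_sub_le hfε c x
  have h₃ := s.abs_smoothExtend_sub_extend_le hf hε hfε (c * x)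
  rw [abs_le] at *
  constructor <;> linarith

end Scale

end Transfer

theorem tendsto_zero_of_eventually_abs_le_mul {J : Type*} {l : Filter J} {a : J → ℝ} {C : ℝ}
    (h : ∀ ε > 0, ∀ᶠ j in l, |a j| ≤ C * ε) : Tendsto a l (𝓝 0) := by
  refine Metric.tendsto_nhds.2 fun ε hε => ?_
  filter_upwards [h (ε / (|C| + 1)) (by positivity)] with j hj
  rw [Real.dist_eq, sub_zero]
  calc |a j| ≤ |C| * (ε / (|C| + 1)) := hj.trans (by gcongr; exact le_abs_self C)
    _ < ε := by
      rw [mul_div_assoc', div_lt_iff₀ (by positivity)]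
      nlinarith [abs_nonneg C]

theorem exists_invariant_mean_of_tendsto {X J : Type*} [Mul X] {P : (X → ℝ) → Prop}
    {l : Filter J} [l.NeBot] (m : J → (X → ℝ) → ℝ)
    (hbdd : ∀ f, P f → ∃ C, ∀ j, |m j f| ≤ C)
    (hone : ∀ j, m j (fun _ => 1) = 1)
    (hpos : ∀ f, P f → (∀ x, 0 ≤ f x) → ∀ ε > 0, ∀ᶠ j in l, -ε ≤ m j f)
    (hadd : ∀ f g, P f → P g →
      Tendsto (fun j => m j (fun x => f x + g x) - (m j f + m j g)) l (𝓝 0))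
    (hsmul : ∀ (c : ℝ) f, P f →
      Tendsto (fun j => m j (fun x => c * f x) - c * m j f) l (𝓝 0))
    (hinv : ∀ (g : X) f, P f → Tendsto (fun j => m j (fun x => f (g * x)) - m j f) l (𝓝 0)) :
    ∃ μ : (X → ℝ) → ℝ, IsMean P μ ∧
      ∀ (g : X) f, P f → μ (fun x => f (g * x)) = μ f := by
  let 𝒰 : Ultrafilter J := .of l
  have h𝒰 : (𝒰 : Filter J) ≤ l := Ultrafilter.of_le l
  have hlim : ∀ f, P f →
      Tendsto (m · f) 𝒰 (𝓝 (limUnder (𝒰 : Filter J) (m · f))) := by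
    intro f hf
    obtain ⟨C, hC⟩ := hbdd f hf
    obtain ⟨L, -, hL⟩ := isCompact_Icc.ultrafilter_le_nhds (𝒰.map (m · f))
      (le_principal_iff.2 (mem_map.2 (univ_mem' fun j => abs_le.1 (hC j))))
    exact tendsto_nhds_limUnder ⟨L, hL⟩
  have hlim_eq : ∀ {a b : J → ℝ} {L : ℝ}, Tendsto (fun j => a j - b j) l (𝓝 0) →
      Tendsto b 𝒰 (𝓝 L) → limUnder (𝒰 : Filter J) a = L := fun hab hb => by
    simpa using ((hab.mono_left h𝒰).add hb).limUnder_eq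
  refine ⟨fun f => limUnder (𝒰 : Filter J) (m · f), ⟨?_, fun f hf hf₀ => ?_,
    fun f g hf hg => hlim_eq (hadd f g hf hg) ((hlim f hf).add (hlim g hg)),
    fun c f hf => hlim_eq (hsmul c f hf) ((hlim f hf).const_mul c)⟩,
    fun g f hf => hlim_eq (hinv g f hf) (hlim f hf)⟩
  · simpa [hone] using (tendsto_const_nhds (x := (1 : ℝ)) (f := (𝒰 : Filter J))).limUnder_eq
  · refine le_of_forall_pos_le_add fun ε hε => ?_
    linarith [ge_of_tendsto (hlim f hf) ((hpos f hf hf₀ ε hε).filter_mono h𝒰)]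

section Main

variable {G : Type*} [Group G] [TopologicalSpace G] [IsTopologicalGroup G]

theorem exists_mem_nhds_one_mul_mul_subset {U : Set G} (hU : U ∈ 𝓝 (1 : G)) :
    ∃ V ∈ 𝓝 (1 : G), V * V * V ⊆ U := by
  obtain ⟨W, hW, hWU⟩ := exists_nhds_one_split hU
  obtain ⟨W', hW', hW'W⟩ := exists_nhds_one_split hW
  refine ⟨W' ∩ W, inter_mem hW' hW, ?_⟩
  rintro _ ⟨_, ⟨a, ha, b, hb, rfl⟩, c, hc, rfl⟩
  exact hWU _ (hW'W a ha.1 b hb.1) c hc.2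

def scaleFilter (H : Subgroup G) : Filter (Σ V : Set G, Scale H V) :=
  comap Sigma.fst (𝓝 (1 : G)).smallSets

theorem scaleFilter_neBot (hSIN : IsSIN G) (H : Subgroup G) [CompactSpace (G ⧸ H)] :
    (scaleFilter H).NeBot := by
  refine comap_neBot fun t ht => ?_
  obtain ⟨U, hU, hUt⟩ := (𝓝 (1 : G)).hasBasis_smallSets.mem_iff.1 ht
  obtain ⟨V, hV, hVU⟩ := exists_isSymmConjNhd_subset hSIN hU
  exact ⟨⟨V, (Scale.nonempty hSIN H hV).some⟩, hUt hVU⟩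

theorem eventually_scaleFilter_oscLE {H : Subgroup G} {f : H → ℝ} (hf : IsRUCB H f) {ε : ℝ}
    (hε : 0 < ε) : ∀ᶠ j in scaleFilter H, OscLE f (j.1 * j.1 * j.1) ε := by
  obtain ⟨U, hU, hfU⟩ := hf.exists_oscLE hε
  obtain ⟨V, hV, hVU⟩ := exists_mem_nhds_one_mul_mul_subset hU
  filter_upwards [tendsto_comap.eventually (eventually_smallSets_subset.2 hV)] with j hj
  exact hfU.mono ((mul_subset_mul (mul_subset_mul hj hj) hj).trans hVU)

end Main

theorem cocompact_subgroup_of_SIN_amenable {G : Type*} [Group G] [TopologicalSpace G]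
    [IsTopologicalGroup G]
    (hSIN : ∀ U ∈ 𝓝 (1 : G), ∃ V ∈ 𝓝 (1 : G), ∀ (g : G), ∀ v ∈ V, g * v * g⁻¹ ∈ U)
    (hG : Amenable G) (H : Subgroup G) (hcomp : CompactSpace (G ⧸ H)) :
    Amenable ↥H := by
  obtain ⟨μ, hμ, hμ_inv⟩ := hG
  have := scaleFilter_neBot hSIN H
  refine exists_invariant_mean_of_tendsto (l := scaleFilter H) (fun j => j.2.approxMean μ)
    (fun f hf => ⟨supAbs f, fun j => j.2.abs_approxMean_le hμ hf.1⟩)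
    (fun j => j.2.approxMean_const hμ) (fun f hf hf₀ ε hε => ?_) (fun f g hf hg => ?_)
    (fun c f hf => ?_) (fun c f hf => ?_)
  · filter_upwards [eventually_scaleFilter_oscLE hf hε] with j hj
    exact j.2.neg_le_approxMean hμ hf.1 hε.le hj hf₀
  · refine tendsto_zero_of_eventually_abs_le_mul (C := 4) fun ε hε => ?_
    filter_upwards [eventually_scaleFilter_oscLE hf hε, eventually_scaleFilter_oscLE hg hε]
      with j hfj hgj
    exact j.2.abs_approxMean_add_sub_le hμ hf.1 hg.1 hε.le hfj hgj
  · refine tendsto_zero_of_eventually_abs_le_mul (C := 2 * |c|) fun ε hε => ?_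
    filter_upwards [eventually_scaleFilter_oscLE hf hε] with j hj
    exact (j.2.abs_approxMean_const_mul_sub_le hμ hf.1 hε.le hj c).trans_eq (by ring)
  · refine tendsto_zero_of_eventually_abs_le_mul (C := 3) fun ε hε => ?_
    filter_upwards [eventually_scaleFilter_oscLE hf hε] with j hj
    exact j.2.abs_approxMean_comp_mul_left_sub_le hμ hμ_inv hf.1 hε.le hj c
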